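/- Let R be a commutative ring with invertible elements s and t, and let n ≥ 2. Then there exists a group homomorphism ρ : VB_n → (Matrix (Fin n) (Fin n) R)ˣ into the group of invertible n×n matrices over R such that for each i, ρ(σ_i) is the invertible matrix equal to the identity except for the 2×2 block !![1−st, t; s, 0] in rows and columns i, i+1, and ρ(ν_i) is the permutation matrix of the transposition of i and i+1. -/
import Mathlib


/-- Relators of the virtual braid group `VB_n`: generators `Sum.inl i = σ_i` and
`Sum.inr i = ν_i` for `i : Fin (n-1)`. -/
def virtualBraidRels (n : ℕ) : Set (FreeGroup (Fin (n - 1) ⊕ Fin (n - 1))) :=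
  let σ : Fin (n - 1) → FreeGroup (Fin (n - 1) ⊕ Fin (n - 1)) := fun i => FreeGroup.of (Sum.inl i)
  let ν : Fin (n - 1) → FreeGroup (Fin (n - 1) ⊕ Fin (n - 1)) := fun i => FreeGroup.of (Sum.inr i)
  { r | (∃ i k : Fin (n - 1), 1 < Nat.dist i.1 k.1 ∧
          r = σ i * σ k * (σ i)⁻¹ * (σ k)⁻¹) ∨
        (∃ i j : Fin (n - 1), (j : ℕ) = (i : ℕ) + 1 ∧
          r = σ i * σ j * σ i * (σ j * σ i * σ j)⁻¹) ∨
        (∃ i : Fin (n - 1), r = ν i * ν i) ∨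
        (∃ i k : Fin (n - 1), 1 < Nat.dist i.1 k.1 ∧
          r = ν i * ν k * (ν i)⁻¹ * (ν k)⁻¹) ∨
        (∃ i j : Fin (n - 1), (j : ℕ) = (i : ℕ) + 1 ∧
          r = ν i * ν j * ν i * (ν j * ν i * ν j)⁻¹) ∨
        (∃ i k : Fin (n - 1), 1 < Nat.dist i.1 k.1 ∧
          r = σ i * ν k * (σ i)⁻¹ * (ν k)⁻¹) ∨
        (∃ i j : Fin (n - 1), (j : ℕ) = (i : ℕ) + 1 ∧
          r = σ i * ν j * ν i * (ν j * ν i * σ j)⁻¹) }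

/-- The virtual braid group on `n` strands, presented by the generators
`σ_1,…,σ_{n-1}, ν_1,…,ν_{n-1}` and the virtual braid relations. -/
def VirtualBraidGroup (n : ℕ) : Type :=
  PresentedGroup (virtualBraidRels n)

noncomputable instance (n : ℕ) : Group (VirtualBraidGroup n) :=
  inferInstanceAs (Group (PresentedGroup (virtualBraidRels n)))

/-- The `n×n` matrix which is the identity except for the `2×2` Alexander crossing block
`!![1-st, t; s, 0]` in rows and columns `i`, `i+1`. -/
def alexanderSigmaMatrix (R : Type*) [CommRing R] (s t : R) (n : ℕ) (i : Fin (n - 1)) :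
    Matrix (Fin n) (Fin n) R :=
  Matrix.of fun j k =>
    if j.1 = i.1 ∧ k.1 = i.1 then 1 - s * t
    else if j.1 = i.1 ∧ k.1 = i.1 + 1 then t
    else if j.1 = i.1 + 1 ∧ k.1 = i.1 then s
    else if j.1 = i.1 + 1 ∧ k.1 = i.1 + 1 then 0
    else if j = k then 1 else 0

/-- The permutation matrix of the transposition of the coordinates `i` and `i+1`. -/
def swapPermMatrix (R : Type*) [CommRing R] (n : ℕ) (i : Fin (n - 1)) :
    Matrix (Fin n) (Fin n) R :=
  Matrix.of fun j k =>
    if j = Equiv.swap (⟨i.1, by have := i.isLt; omega⟩ : Fin n)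
          (⟨i.1 + 1, by have := i.isLt; omega⟩ : Fin n) k then 1 else 0

namespace VBAux
variable {R : Type*} [CommRing R] {n : ℕ}

/-- The `n×n` matrix equal to the identity except for the `m×m` block `a`
in rows and columns `p, …, p+m-1`. -/
def lb (n : ℕ) {R : Type*} [CommRing R] (m : ℕ) (a : Matrix (Fin m) (Fin m) R) (p : ℕ) :
    Matrix (Fin n) (Fin n) R :=
  Matrix.of fun j k =>
    if h : p ≤ j.1 ∧ j.1 < p + m ∧ p ≤ k.1 ∧ k.1 < p + m then
      a ⟨j.1 - p, by omega⟩ ⟨k.1 - p, by omega⟩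
    else if j = k ∧ ¬(p ≤ j.1 ∧ j.1 < p + m) then 1 else 0

lemma lb_apply_in {m p : ℕ} {a : Matrix (Fin m) (Fin m) R} {j k : Fin n}
    (hj : p ≤ j.1 ∧ j.1 < p + m) (hk : p ≤ k.1 ∧ k.1 < p + m) :
    lb n m a p j k = a ⟨j.1 - p, by omega⟩ ⟨k.1 - p, by omega⟩ := by
  simp only [lb, Matrix.of_apply]
  rw [dif_pos ⟨hj.1, hj.2, hk.1, hk.2⟩]

lemma lb_apply_row_out {m p : ℕ} {a : Matrix (Fin m) (Fin m) R} {j k : Fin n}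
    (hj : ¬(p ≤ j.1 ∧ j.1 < p + m)) :
    lb n m a p j k = if j = k then 1 else 0 := by
  simp only [lb, Matrix.of_apply]
  rw [dif_neg (by tauto)]
  by_cases h : j = k
  · rw [if_pos ⟨h, hj⟩, if_pos h]
  · rw [if_neg (by tauto), if_neg h]

lemma lb_apply_col_out {m p : ℕ} {a : Matrix (Fin m) (Fin m) R} {j k : Fin n}
    (hk : ¬(p ≤ k.1 ∧ k.1 < p + m)) :
    lb n m a p j k = if j = k then 1 else 0 := by
  by_cases h : j = k
  · subst h; rw [lb_apply_row_out hk, if_pos rfl]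
  · simp only [lb, Matrix.of_apply]
    rw [dif_neg (by tauto), if_neg (by tauto), if_neg h]

lemma lb_one (m p : ℕ) : lb n m (1 : Matrix (Fin m) (Fin m) R) p = 1 := by
  ext j k
  by_cases hj : p ≤ j.1 ∧ j.1 < p + m
  · by_cases hk : p ≤ k.1 ∧ k.1 < p + m
    · rw [lb_apply_in hj hk]
      by_cases h : j = k
      · subst h; simp [Matrix.one_apply]
      · rw [Matrix.one_apply_ne h, Matrix.one_apply_ne]
        intro hc
        apply h
        have := Fin.val_eq_of_eq hc
        exact Fin.ext (by simp at this; omega)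
    · rw [lb_apply_col_out hk, Matrix.one_apply]
  · rw [lb_apply_row_out hj, Matrix.one_apply]

/-- Multiplying by `lb` on the left acts trivially on rows outside the block. -/
lemma lb_mul_row_out {m p : ℕ} {a : Matrix (Fin m) (Fin m) R} {j k : Fin n}
    (hj : ¬(p ≤ j.1 ∧ j.1 < p + m)) (M : Matrix (Fin n) (Fin n) R) :
    (lb n m a p * M) j k = M j k := by
  rw [Matrix.mul_apply, Finset.sum_eq_single j]
  · rw [lb_apply_row_out hj, if_pos rfl, one_mul]
  · intro l _ hl
    rw [lb_apply_row_out hj, if_neg (fun hh => hl hh.symm), zero_mul]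
  · intro hc; exact absurd (Finset.mem_univ j) hc

/-- Multiplying by `lb` on the right acts trivially on columns outside the block. -/
lemma mul_lb_col_out {m p : ℕ} {a : Matrix (Fin m) (Fin m) R} {j k : Fin n}
    (hk : ¬(p ≤ k.1 ∧ k.1 < p + m)) (M : Matrix (Fin n) (Fin n) R) :
    (M * lb n m a p) j k = M j k := by
  rw [Matrix.mul_apply, Finset.sum_eq_single k]
  · rw [lb_apply_col_out hk, if_pos rfl, mul_one]
  · intro l _ hl
    rw [lb_apply_col_out hk, if_neg hl, mul_zero]
  · intro hc; exact absurd (Finset.mem_univ k) hc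

lemma lb_mul_lb_cross {m m' p q : ℕ} {a : Matrix (Fin m) (Fin m) R}
    {b : Matrix (Fin m') (Fin m') R} {j k : Fin n}
    (hdis : p + m ≤ q ∨ q + m' ≤ p)
    (hj : p ≤ j.1 ∧ j.1 < p + m) (hk : q ≤ k.1 ∧ k.1 < q + m') :
    (lb n m a p * lb n m' b q) j k = 0 := by
  rw [Matrix.mul_apply]
  apply Finset.sum_eq_zero
  intro l _
  by_cases hl : p ≤ l.1 ∧ l.1 < p + m
  · rw [lb_apply_row_out (a := b) (by omega), if_neg (by rintro rfl; omega), mul_zero]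
  · rw [lb_apply_col_out (a := a) hl, if_neg (by rintro rfl; exact hl hj), zero_mul]

lemma lb_mul {m p : ℕ} (hm : p + m ≤ n) (a b : Matrix (Fin m) (Fin m) R) :
    lb n m a p * lb n m b p = lb n m (a * b) p := by
  ext j k
  by_cases hj : p ≤ j.1 ∧ j.1 < p + m
  · by_cases hk : p ≤ k.1 ∧ k.1 < p + m
    · rw [Matrix.mul_apply, lb_apply_in hj hk, Matrix.mul_apply]
      have hvanish : ∀ l : Fin n,
          l ∉ Finset.univ.image (fun x : Fin m => (⟨p + x.1, by omega⟩ : Fin n)) →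
          lb n m a p j l * lb n m b p l k = 0 := by
        intro l hl
        have hlo : ¬(p ≤ l.1 ∧ l.1 < p + m) := by
          intro hc
          apply hl
          simp only [Finset.mem_image, Finset.mem_univ, true_and]
          exact ⟨⟨l.1 - p, by omega⟩, Fin.ext (by simp; omega)⟩
        rw [lb_apply_col_out hlo, if_neg (by rintro rfl; exact hlo hj), zero_mul]
      rw [← Finset.sum_subset (Finset.subset_univ _) (fun l _ hl => hvanish l hl),
        Finset.sum_image
          (by intro x _ y _ h; have := Fin.val_eq_of_eq h; simp at this; exact Fin.ext this)]
      apply Finset.sum_congr rfl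
      intro x _
      have := x.isLt
      have hx : p ≤ (⟨p + x.1, by omega⟩ : Fin n).1 ∧ (⟨p + x.1, by omega⟩ : Fin n).1 < p + m :=
        ⟨by simp, by simp⟩
      rw [lb_apply_in hj hx, lb_apply_in hx hk]
      congr 2 <;> exact Fin.ext (by simp)
    · rw [Matrix.mul_apply, lb_apply_col_out hk, if_neg (by rintro rfl; exact hk hj)]
      apply Finset.sum_eq_zero
      intro l _
      by_cases hl : p ≤ l.1 ∧ l.1 < p + m
      · rw [lb_apply_col_out (a := b) hk, if_neg (by rintro rfl; exact hk hl), mul_zero]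
      · rw [lb_apply_col_out (a := a) hl, if_neg (by rintro rfl; exact hl hj), zero_mul]
  · rw [lb_mul_row_out hj, lb_apply_row_out hj, lb_apply_row_out hj]

lemma lb_comm {m m' p q : ℕ} (hdis : p + m ≤ q ∨ q + m' ≤ p) (a : Matrix (Fin m) (Fin m) R)
    (b : Matrix (Fin m') (Fin m') R) :
    lb n m a p * lb n m' b q = lb n m' b q * lb n m a p := by
  ext j k
  by_cases hj : p ≤ j.1 ∧ j.1 < p + m
  · have hjq : ¬(q ≤ j.1 ∧ j.1 < q + m') := by omega
    rw [lb_mul_row_out (a := b) hjq]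
    by_cases hk : q ≤ k.1 ∧ k.1 < q + m'
    · rw [lb_mul_lb_cross hdis hj hk, lb_apply_col_out (a := a) (by omega),
        if_neg (by rintro rfl; omega)]
    · rw [mul_lb_col_out hk]
  · by_cases hjq : q ≤ j.1 ∧ j.1 < q + m'
    · rw [lb_mul_row_out (a := a) hj]
      by_cases hk : p ≤ k.1 ∧ k.1 < p + m
      · rw [lb_mul_lb_cross (hdis.symm.imp id id) hjq hk, lb_apply_col_out (a := b) (by omega),
          if_neg (by rintro rfl; omega)]
      · rw [mul_lb_col_out hk]
    · rw [lb_mul_row_out (a := a) hj, lb_mul_row_out (a := b) hjq,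
        lb_apply_row_out hj, lb_apply_row_out hjq]

lemma lb_lb {m m' p q : ℕ} (h : q + m ≤ m') (a : Matrix (Fin m) (Fin m) R) :
    lb n m' (lb m' m a q) p = lb n m a (p + q) := by
  ext j k
  by_cases hj : p ≤ j.1 ∧ j.1 < p + m'
  · by_cases hk : p ≤ k.1 ∧ k.1 < p + m'
    · rw [lb_apply_in hj hk]
      by_cases hj2 : p + q ≤ j.1 ∧ j.1 < p + q + m
      · by_cases hk2 : p + q ≤ k.1 ∧ k.1 < p + q + m
        · rw [lb_apply_in (j := (⟨j.1 - p, by omega⟩ : Fin m')) (k := ⟨k.1 - p, by omega⟩)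
            ⟨by simp; omega, by simp; omega⟩ ⟨by simp; omega, by simp; omega⟩,
            lb_apply_in hj2 hk2]
          congr 1 <;> exact Fin.ext (by simp; omega)
        · rw [lb_apply_col_out (k := (⟨k.1 - p, by omega⟩ : Fin m')) (by simp; omega),
            lb_apply_col_out hk2,
            if_neg (fun hc : (⟨j.1 - p, by omega⟩ : Fin m') = ⟨k.1 - p, by omega⟩ => by
              have := Fin.val_eq_of_eq hc; simp at this; omega),
            if_neg (by rintro rfl; omega)]
      · rw [lb_apply_row_out (j := (⟨j.1 - p, by omega⟩ : Fin m')) (by simp; omega),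
          lb_apply_row_out hj2]
        by_cases hjk : j = k
        · subst hjk; rw [if_pos rfl, if_pos rfl]
        · rw [if_neg hjk, if_neg (fun hh => hjk (Fin.ext (by have := Fin.val_eq_of_eq hh; simp at this; omega)))]
    · have hk2 : ¬(p + q ≤ k.1 ∧ k.1 < p + q + m) := by omega
      rw [lb_apply_col_out hk, lb_apply_col_out hk2]
  · have hj2 : ¬(p + q ≤ j.1 ∧ j.1 < p + q + m) := by omega
    rw [lb_apply_row_out hj, lb_apply_row_out hj2]

end VBAux

section AlexanderBlocks

variable (R : Type*) [CommRing R] (s t : Rˣ)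

/-- The 2×2 Alexander crossing block `!![1-st, t; s, 0]`. -/
def Smat : Matrix (Fin 2) (Fin 2) R :=
  Matrix.of fun x y =>
    if x.1 = 0 then (if y.1 = 0 then 1 - (s : R) * t else t)
    else (if y.1 = 0 then s else 0)

/-- The inverse of the 2×2 Alexander crossing block. -/
def Smatinv : Matrix (Fin 2) (Fin 2) R :=
  Matrix.of fun x y =>
    if x.1 = 0 then (if y.1 = 0 then 0 else ((s⁻¹ : Rˣ) : R))
    else (if y.1 = 0 then ((t⁻¹ : Rˣ) : R) else 1 - ((s⁻¹ : Rˣ) : R) * ((t⁻¹ : Rˣ) : R))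

/-- The 2×2 swap block `!![0, 1; 1, 0]`. -/
def Vmat : Matrix (Fin 2) (Fin 2) R :=
  Matrix.of fun x y => if x.1 = y.1 then 0 else 1

lemma Smat_mul_Smatinv : Smat R s t * Smatinv R s t = 1 := by
  have hs : (s : R) * ((s⁻¹ : Rˣ) : R) = 1 := by rw [← Units.val_mul, mul_inv_cancel, Units.val_one]
  have ht : (t : R) * ((t⁻¹ : Rˣ) : R) = 1 := by rw [← Units.val_mul, mul_inv_cancel, Units.val_one]
  ext j k
  fin_cases j <;> fin_cases k <;>
    simp [Smat, Smatinv, Matrix.mul_apply, Fin.sum_univ_two, Matrix.one_apply]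
  linear_combination (-(t : R)) * hs - ((↑(s⁻¹ : Rˣ)) : R) * ht

lemma Smatinv_mul_Smat : Smatinv R s t * Smat R s t = 1 := by
  have hs : (s : R) * ((s⁻¹ : Rˣ) : R) = 1 := by rw [← Units.val_mul, mul_inv_cancel, Units.val_one]
  have ht : (t : R) * ((t⁻¹ : Rˣ) : R) = 1 := by rw [← Units.val_mul, mul_inv_cancel, Units.val_one]
  ext j k
  fin_cases j <;> fin_cases k <;>
    simp [Smat, Smatinv, Matrix.mul_apply, Fin.sum_univ_two, Matrix.one_apply]
  linear_combination (-(s : R)) * ht - ((↑(t⁻¹ : Rˣ)) : R) * hs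

lemma Vmat_mul_Vmat : Vmat R * Vmat R = 1 := by
  ext j k
  fin_cases j <;> fin_cases k <;>
    simp [Vmat, Matrix.mul_apply, Fin.sum_univ_two, Matrix.one_apply]

open VBAux

lemma lb_Smat_zero : VBAux.lb 3 2 (Smat R s t) 0 = !![1 - (s:R)*t, t, 0; s, 0, 0; 0, 0, 1] := by
  ext j k
  fin_cases j <;> fin_cases k <;> simp [VBAux.lb, Smat, Matrix.vecHead, Matrix.vecTail]

lemma lb_Smat_one : VBAux.lb 3 2 (Smat R s t) 1 = !![1, 0, 0; 0, 1 - (s:R)*t, t; 0, s, 0] := by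
  ext j k
  fin_cases j <;> fin_cases k <;> simp [VBAux.lb, Smat, Matrix.vecHead, Matrix.vecTail]

lemma lb_Vmat_zero : VBAux.lb 3 2 (Vmat R) 0 = !![0, 1, 0; 1, 0, 0; 0, 0, (1:R)] := by
  ext j k
  fin_cases j <;> fin_cases k <;> simp [VBAux.lb, Vmat, Matrix.vecHead, Matrix.vecTail]

lemma lb_Vmat_one : VBAux.lb 3 2 (Vmat R) 1 = !![1, 0, 0; 0, 0, 1; 0, 1, (0:R)] := by
  ext j k
  fin_cases j <;> fin_cases k <;> simp [VBAux.lb, Vmat, Matrix.vecHead, Matrix.vecTail]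

lemma braid3 : VBAux.lb 3 2 (Smat R s t) 0 * VBAux.lb 3 2 (Smat R s t) 1 * VBAux.lb 3 2 (Smat R s t) 0
    = VBAux.lb 3 2 (Smat R s t) 1 * VBAux.lb 3 2 (Smat R s t) 0 * VBAux.lb 3 2 (Smat R s t) 1 := by
  rw [lb_Smat_zero, lb_Smat_one]
  ext j k
  fin_cases j <;> fin_cases k <;>
    simp [Matrix.mul_apply, Fin.sum_univ_three, Matrix.vecHead, Matrix.vecTail] <;> ring

lemma vbraid3 : VBAux.lb 3 2 (Vmat R) 0 * VBAux.lb 3 2 (Vmat R) 1 * VBAux.lb 3 2 (Vmat R) 0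
    = VBAux.lb 3 2 (Vmat R) 1 * VBAux.lb 3 2 (Vmat R) 0 * VBAux.lb 3 2 (Vmat R) 1 := by
  rw [lb_Vmat_zero, lb_Vmat_one]
  ext j k
  fin_cases j <;> fin_cases k <;>
    simp [Matrix.mul_apply, Fin.sum_univ_three, Matrix.vecHead, Matrix.vecTail]

lemma mixed3 : VBAux.lb 3 2 (Smat R s t) 0 * VBAux.lb 3 2 (Vmat R) 1 * VBAux.lb 3 2 (Vmat R) 0
    = VBAux.lb 3 2 (Vmat R) 1 * VBAux.lb 3 2 (Vmat R) 0 * VBAux.lb 3 2 (Smat R s t) 1 := by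
  rw [lb_Smat_zero, lb_Smat_one, lb_Vmat_zero, lb_Vmat_one]
  ext j k
  fin_cases j <;> fin_cases k <;>
    simp [Matrix.mul_apply, Fin.sum_univ_three, Matrix.vecHead, Matrix.vecTail]

end AlexanderBlocks

section Glue

open VBAux

variable (R : Type*) [CommRing R] (s t : Rˣ) {n : ℕ}

/-- The image of the generator `σ_i`, as a unit. -/
def sigmaU (i : Fin (n - 1)) : (Matrix (Fin n) (Fin n) R)ˣ :=
  ⟨lb n 2 (Smat R s t) i.1, lb n 2 (Smatinv R s t) i.1,
    by rw [lb_mul (by have := i.isLt; omega), Smat_mul_Smatinv, lb_one],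
    by rw [lb_mul (by have := i.isLt; omega), Smatinv_mul_Smat, lb_one]⟩

/-- The image of the generator `ν_i`, as a unit. -/
def nuU (i : Fin (n - 1)) : (Matrix (Fin n) (Fin n) R)ˣ :=
  ⟨lb n 2 (Vmat R) i.1, lb n 2 (Vmat R) i.1,
    by rw [lb_mul (by have := i.isLt; omega), Vmat_mul_Vmat, lb_one],
    by rw [lb_mul (by have := i.isLt; omega), Vmat_mul_Vmat, lb_one]⟩

@[simp] lemma sigmaU_val (i : Fin (n - 1)) :
    ((sigmaU R s t i : (Matrix (Fin n) (Fin n) R)ˣ) : Matrix (Fin n) (Fin n) R)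
      = lb n 2 (Smat R s t) i.1 := rfl

@[simp] lemma nuU_val (i : Fin (n - 1)) :
    ((nuU R i : (Matrix (Fin n) (Fin n) R)ˣ) : Matrix (Fin n) (Fin n) R)
      = lb n 2 (Vmat R) i.1 := rfl

lemma dist_cases {i k : Fin (n - 1)} (h : 1 < Nat.dist i.1 k.1) :
    i.1 + 2 ≤ k.1 ∨ k.1 + 2 ≤ i.1 := by
  simp [Nat.dist] at h; omega

lemma embed_braid {A B : Matrix (Fin 2) (Fin 2) R}
    (h3 : lb 3 2 A 0 * lb 3 2 B 1 * lb 3 2 A 0 = lb 3 2 B 1 * lb 3 2 A 0 * lb 3 2 B 1)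
    (i j : Fin (n - 1)) (hj : (j : ℕ) = (i : ℕ) + 1) :
    lb n 2 A i.1 * lb n 2 B j.1 * lb n 2 A i.1
      = lb n 2 B j.1 * lb n 2 A i.1 * lb n 2 B j.1 := by
  have hn3 : i.1 + 3 ≤ n := by have := j.isLt; omega
  have e0 : lb n 2 A i.1 = lb n 3 (lb 3 2 A 0) i.1 := by rw [lb_lb (by omega), add_zero]
  have e1 : lb n 2 B j.1 = lb n 3 (lb 3 2 B 1) i.1 := by rw [lb_lb (by omega), hj]
  rw [e0, e1, lb_mul hn3, lb_mul hn3, lb_mul hn3, lb_mul hn3, h3]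

lemma embed_mixed (i j : Fin (n - 1)) (hj : (j : ℕ) = (i : ℕ) + 1) :
    lb n 2 (Smat R s t) i.1 * lb n 2 (Vmat R) j.1 * lb n 2 (Vmat R) i.1
      = lb n 2 (Vmat R) j.1 * lb n 2 (Vmat R) i.1 * lb n 2 (Smat R s t) j.1 := by
  have hn3 : i.1 + 3 ≤ n := by have := j.isLt; omega
  have e0 : ∀ a : Matrix (Fin 2) (Fin 2) R, lb n 2 a i.1 = lb n 3 (lb 3 2 a 0) i.1 := fun a => by
    rw [lb_lb (by omega), add_zero]
  have e1 : ∀ a : Matrix (Fin 2) (Fin 2) R, lb n 2 a j.1 = lb n 3 (lb 3 2 a 1) i.1 := fun a => by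
    rw [lb_lb (by omega), hj]
  rw [e0, e0, e1, e1, lb_mul hn3, lb_mul hn3, lb_mul hn3, lb_mul hn3, mixed3]

lemma rels_hold :
    ∀ r ∈ virtualBraidRels n,
      FreeGroup.lift (Sum.elim (sigmaU R s t (n := n)) (nuU R (n := n))) r = 1 := by
  intro r hr
  simp only [virtualBraidRels, Set.mem_setOf_eq] at hr
  rcases hr with ⟨i,k,hik,rfl⟩|⟨i,j,hij,rfl⟩|⟨i,rfl⟩|⟨i,k,hik,rfl⟩|⟨i,j,hij,rfl⟩|⟨i,k,hik,rfl⟩|⟨i,j,hij,rfl⟩ <;>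
    simp only [map_mul, map_inv, FreeGroup.lift_apply_of, Sum.elim_inl, Sum.elim_inr]
  · have hc : sigmaU R s t i * sigmaU R s t k = sigmaU R s t k * sigmaU R s t i :=
      Units.ext (by simp only [Units.val_mul, sigmaU_val]; exact lb_comm (dist_cases hik) _ _)
    rw [hc]; group
  · have hc : sigmaU R s t i * sigmaU R s t j * sigmaU R s t i
        = sigmaU R s t j * sigmaU R s t i * sigmaU R s t j :=
      Units.ext (by
        simp only [Units.val_mul, sigmaU_val]
        exact embed_braid R (braid3 R s t) i j hij)
    rw [hc]; group
  · exact Units.ext (by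
      simp only [Units.val_mul, nuU_val, Units.val_one]
      rw [lb_mul (by have := i.isLt; omega), Vmat_mul_Vmat, lb_one])
  · have hc : nuU R i * nuU R k = nuU R k * nuU R i :=
      Units.ext (by simp only [Units.val_mul, nuU_val]; exact lb_comm (dist_cases hik) _ _)
    rw [hc]; group
  · have hc : nuU R i * nuU R j * nuU R i = nuU R j * nuU R i * nuU R j :=
      Units.ext (by
        simp only [Units.val_mul, nuU_val]
        exact embed_braid R (vbraid3 R) i j hij)
    rw [hc]; group
  · have hc : sigmaU R s t i * nuU R k = nuU R k * sigmaU R s t i :=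
      Units.ext (by
        simp only [Units.val_mul, sigmaU_val, nuU_val]; exact lb_comm (dist_cases hik) _ _)
    rw [hc]; group
  · have hc : sigmaU R s t i * nuU R j * nuU R i = nuU R j * nuU R i * sigmaU R s t j :=
      Units.ext (by
        simp only [Units.val_mul, sigmaU_val, nuU_val]
        exact embed_mixed R s t i j hij)
    rw [hc]; group

@[simp] lemma fin_val_mk' {m a : ℕ} (h : a < m) : ((⟨a, h⟩ : Fin m) : ℕ) = a := rfl

lemma lb_eq_alex (i : Fin (n - 1)) :
    lb n 2 (Smat R s t) i.1 = alexanderSigmaMatrix R (s : R) (t : R) n i := by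
  ext j k
  simp only [lb, Smat, alexanderSigmaMatrix, Matrix.of_apply, Fin.ext_iff, fin_val_mk']
  split_ifs <;> first | rfl | omega

lemma lb_eq_swap (i : Fin (n - 1)) :
    lb n 2 (Vmat R) i.1 = swapPermMatrix R n i := by
  ext j k
  simp only [lb, Vmat, swapPermMatrix, Matrix.of_apply, Equiv.swap_apply_def, Fin.ext_iff,
    apply_ite (Fin.val), Fin.val_mk]
  split_ifs <;> first | rfl | omega

end Glue

open VBAux
/-- The Alexander biquandle (Burau-type) representation of the virtual braid group `VB_n`
by invertible `n×n` matrices over a commutative ring `R` with invertible elements `s`, `t`: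
`σ_i` maps to the identity matrix with the block `!![1-st, t; s, 0]` in rows and columns
`i`, `i+1`, and `ν_i` maps to the permutation matrix of the transposition `(i, i+1)`. -/
theorem virtual_braid_group_alexander_matrix_representation
    (R : Type*) [CommRing R] (s t : Rˣ) (n : ℕ) (hn : 2 ≤ n) :
    ∃ ρ : VirtualBraidGroup n →* (Matrix (Fin n) (Fin n) R)ˣ,
      (∀ i : Fin (n - 1),
        ((ρ (PresentedGroup.of (Sum.inl i)) : (Matrix (Fin n) (Fin n) R)ˣ) :
            Matrix (Fin n) (Fin n) R) = alexanderSigmaMatrix R (s : R) (t : R) n i) ∧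
      (∀ i : Fin (n - 1),
        ((ρ (PresentedGroup.of (Sum.inr i)) : (Matrix (Fin n) (Fin n) R)ˣ) :
            Matrix (Fin n) (Fin n) R) = swapPermMatrix R n i) := by
  show ∃ ρ : PresentedGroup (virtualBraidRels n) →* (Matrix (Fin n) (Fin n) R)ˣ,
      (∀ i : Fin (n - 1),
        ((ρ (PresentedGroup.of (Sum.inl i)) : (Matrix (Fin n) (Fin n) R)ˣ) :
            Matrix (Fin n) (Fin n) R) = alexanderSigmaMatrix R (s : R) (t : R) n i) ∧
      (∀ i : Fin (n - 1),
        ((ρ (PresentedGroup.of (Sum.inr i)) : (Matrix (Fin n) (Fin n) R)ˣ) :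
            Matrix (Fin n) (Fin n) R) = swapPermMatrix R n i)
  refine ⟨PresentedGroup.toGroup (rels_hold R s t), fun i => ?_, fun i => ?_⟩
  · rw [PresentedGroup.toGroup.of]
    exact lb_eq_alex R s t i
  · rw [PresentedGroup.toGroup.of]
    exact lb_eq_swap R i
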